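/- arXiv:1710.03977 — 3 statements merged into one kernel-verified Lean document; each statement's English description precedes it below -/
import Mathlib

section
/- Let r ≥ 1, let U ⊆ ℂ be open, let z ∈ U, let θ, η : U → M_r(ℂ) be twice differentiable at z with θ(z) and η(z) invertible, and let A ∈ M_r(ℂ). Then at the point z (writing ′ and ″ for first and second derivatives, taken entrywise): (i) (θη)⁻¹·A·(θη) + (θη)⁻¹·(θη)′ = η⁻¹·(θ⁻¹Aθ + θ⁻¹θ′)·η + η⁻¹η′ ; and (ii) Tr((θη)⁻¹·A·(θη)′) + (1/2)·Tr((θη)⁻¹·(θη)″) = Tr(θ⁻¹·A·θ′) + (1/2)·Tr(θ⁻¹·θ″) + Tr(η⁻¹·(θ⁻¹Aθ + θ⁻¹θ′)·η′) + (1/2)·Tr(η⁻¹·η″). -/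
open Matrix

/-- Entrywise derivative of a matrix-valued function of one complex variable. -/
noncomputable def mderiv {r : ℕ} (f : ℂ → Matrix (Fin r) (Fin r) ℂ) (z : ℂ) :
    Matrix (Fin r) (Fin r) ℂ :=
  Matrix.of fun i j => deriv (fun w => f w i j) z

/-- Entrywise differentiability of a matrix-valued function at a point. -/
def MatDifferentiableAt {r : ℕ} (f : ℂ → Matrix (Fin r) (Fin r) ℂ) (z : ℂ) : Prop :=
  ∀ i j, DifferentiableAt ℂ (fun w => f w i j) z

/-! By the product rule, `(θη)′ = θ′η + θη′` and `(θη)″ = θ″η + 2θ′η′ + θη″`. After that both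
identities are algebra: the first only needs `θ⁻¹θ = 1`; in the second, the terms `θ⁻¹Aθ′` and
`θ⁻¹θ″` appear conjugated by `η`, which the trace ignores, and the factor `½` turns the doubled
cross term `θ′η′` into the summand `Tr(η⁻¹θ⁻¹θ′η′)` of `T(η)` applied to `θ⁻¹Aθ + θ⁻¹θ′`. -/

open Filter Topology

section MatrixDeriv

variable {r : ℕ} {f g : ℂ → Matrix (Fin r) (Fin r) ℂ} {z : ℂ}

theorem MatDifferentiableAt.mul (hf : MatDifferentiableAt f z) (hg : MatDifferentiableAt g z) :
    MatDifferentiableAt (fun w => f w * g w) z := fun i j => by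
  simp only [Matrix.mul_apply]
  exact DifferentiableAt.fun_sum fun k _ => (hf i k).fun_mul (hg k j)

theorem mderiv_add (hf : MatDifferentiableAt f z) (hg : MatDifferentiableAt g z) :
    mderiv (fun w => f w + g w) z = mderiv f z + mderiv g z := by
  ext i j
  exact deriv_fun_add (hf i j) (hg i j)

theorem mderiv_mul (hf : MatDifferentiableAt f z) (hg : MatDifferentiableAt g z) :
    mderiv (fun w => f w * g w) z = mderiv f z * g z + f z * mderiv g z := by
  ext i j
  simp only [mderiv, Matrix.of_apply, Matrix.add_apply, Matrix.mul_apply]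
  rw [deriv_fun_sum fun k _ => (hf i k).fun_mul (hg k j), ← Finset.sum_add_distrib]
  exact Finset.sum_congr rfl fun k _ => deriv_fun_mul (hf i k) (hg k j)

theorem Filter.EventuallyEq.mderiv_eq (h : f =ᶠ[𝓝 z] g) : mderiv f z = mderiv g z := by
  ext i j
  exact (h.fun_comp fun M => M i j).deriv_eq

theorem mderiv_mderiv_mul (hf : ∀ᶠ w in 𝓝 z, MatDifferentiableAt f w)
    (hg : ∀ᶠ w in 𝓝 z, MatDifferentiableAt g w) (hf' : MatDifferentiableAt (mderiv f) z)
    (hg' : MatDifferentiableAt (mderiv g) z) :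
    mderiv (mderiv fun w => f w * g w) z =
      (mderiv (mderiv f) z * g z + mderiv f z * mderiv g z) +
        (mderiv f z * mderiv g z + f z * mderiv (mderiv g) z) := by
  have hfz := hf.self_of_nhds
  have hgz := hg.self_of_nhds
  have hprod : mderiv (fun w => f w * g w) =ᶠ[𝓝 z] fun w => mderiv f w * g w + f w * mderiv g w :=
    (hf.and hg).mono fun w hw => mderiv_mul hw.1 hw.2
  rw [hprod.mderiv_eq, mderiv_add (hf'.mul hgz) (hfz.mul hg'), mderiv_mul hf' hgz,
    mderiv_mul hfz hg']

end MatrixDeriv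

section Gauge

variable {n K : Type*} [Fintype n] [DecidableEq n] [Field K]

/-- The transformation `T(θ)` of the paper; `θ'` and `θ''` play the roles of `θ′` and `θ″`. -/
noncomputable def gaugeTransform (θ θ' θ'' : Matrix n n K) (p : Matrix n n K × K) :
    Matrix n n K × K :=
  (θ⁻¹ * p.1 * θ + θ⁻¹ * θ', p.2 + trace (θ⁻¹ * p.1 * θ') + 1 / 2 * trace (θ⁻¹ * θ''))

theorem gaugeTransform_mul [NeZero (2 : K)] {θ η : Matrix n n K} (hθ : IsUnit θ) (hη : IsUnit η)
    (θ' θ'' η' η'' : Matrix n n K) :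
    gaugeTransform (θ * η) (θ' * η + θ * η') ((θ'' * η + θ' * η') + (θ' * η' + θ * η'')) =
      gaugeTransform η η' η'' ∘ gaugeTransform θ θ' θ'' := by
  have hθθ : θ⁻¹ * θ = 1 := nonsing_inv_mul θ ((isUnit_iff_isUnit_det θ).mp hθ)
  have cancel (X : Matrix n n K) : η⁻¹ * θ⁻¹ * (θ * X) = η⁻¹ * X := by
    rw [Matrix.mul_assoc, ← Matrix.mul_assoc θ⁻¹, hθθ, Matrix.one_mul]
  funext ⟨A, a⟩
  simp only [gaugeTransform, Function.comp_apply, Matrix.mul_inv_rev, Prod.mk.injEq]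
  constructor
  · simp only [Matrix.mul_add, cancel, Matrix.add_mul, Matrix.mul_assoc]
    abel
  · have conj (X : Matrix n n K) : trace (η⁻¹ * (θ⁻¹ * X) * η) = trace (θ⁻¹ * X) :=
      trace_conj' hη _
    have conjA : trace (η⁻¹ * θ⁻¹ * A * (θ' * η)) = trace (θ⁻¹ * A * θ') := by
      simpa only [Matrix.mul_assoc] using conj (A * θ')
    have conj'' : trace (η⁻¹ * θ⁻¹ * (θ'' * η)) = trace (θ⁻¹ * θ'') := by
      simpa only [Matrix.mul_assoc] using conj θ''
    simp only [Matrix.mul_add, Matrix.add_mul, trace_add, cancel, conjA, conj'']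
    simp only [Matrix.mul_assoc]
    field_simp
    ring

end Gauge

theorem stmt2_general (r : ℕ) (U : Set ℂ) (hU : IsOpen U) (z : ℂ) (hz : z ∈ U)
    (θ η : ℂ → Matrix (Fin r) (Fin r) ℂ) (A : Matrix (Fin r) (Fin r) ℂ)
    (hθ : ∀ w ∈ U, MatDifferentiableAt θ w)
    (hθ' : MatDifferentiableAt (fun w => mderiv θ w) z)
    (hη : ∀ w ∈ U, MatDifferentiableAt η w)
    (hη' : MatDifferentiableAt (fun w => mderiv η w) z)
    (hθz : IsUnit (θ z)) (hηz : IsUnit (η z)) :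
    ((θ z * η z)⁻¹ * A * (θ z * η z) + (θ z * η z)⁻¹ * mderiv (fun w => θ w * η w) z
      = (η z)⁻¹ * ((θ z)⁻¹ * A * θ z + (θ z)⁻¹ * mderiv θ z) * η z
          + (η z)⁻¹ * mderiv η z)
    ∧
    (trace ((θ z * η z)⁻¹ * A * mderiv (fun w => θ w * η w) z)
        + (1 / 2 : ℂ) *
            trace ((θ z * η z)⁻¹ * mderiv (fun w => mderiv (fun t => θ t * η t) w) z)
      = trace ((θ z)⁻¹ * A * mderiv θ z)
          + (1 / 2 : ℂ) * trace ((θ z)⁻¹ * mderiv (fun w => mderiv θ w) z)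
          + trace ((η z)⁻¹ * ((θ z)⁻¹ * A * θ z + (θ z)⁻¹ * mderiv θ z) * mderiv η z)
          + (1 / 2 : ℂ) * trace ((η z)⁻¹ * mderiv (fun w => mderiv η w) z)) := by
  have hUz : ∀ᶠ w in 𝓝 z, w ∈ U := hU.mem_nhds hz
  have cocycle := congrFun (gaugeTransform_mul hθz hηz (mderiv θ z) (mderiv (mderiv θ) z)
    (mderiv η z) (mderiv (mderiv η) z)) (A, 0)
  simp only [gaugeTransform, Function.comp_apply, Prod.mk.injEq, zero_add] at cocycle
  rw [mderiv_mul (hθ z hz) (hη z hz),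
    mderiv_mderiv_mul (hUz.mono hθ) (hUz.mono hη) hθ' hη']
  exact cocycle

/-- cocycle property of the extended-connection transformation
T(θ): (A, a) ↦ (θ⁻¹Aθ + θ⁻¹θ′, a + Tr(θ⁻¹Aθ′) + ½Tr(θ⁻¹θ″)), namely T(θη) = T(η)∘T(θ). -/
theorem stmt2 (r : ℕ) (hr : 1 ≤ r) (U : Set ℂ) (hU : IsOpen U) (z : ℂ) (hz : z ∈ U)
    (θ η : ℂ → Matrix (Fin r) (Fin r) ℂ) (A : Matrix (Fin r) (Fin r) ℂ)
    (hθ : ∀ w ∈ U, MatDifferentiableAt θ w)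
    (hθ' : MatDifferentiableAt (fun w => mderiv θ w) z)
    (hη : ∀ w ∈ U, MatDifferentiableAt η w)
    (hη' : MatDifferentiableAt (fun w => mderiv η w) z)
    (hθz : IsUnit (θ z)) (hηz : IsUnit (η z)) :
    ((θ z * η z)⁻¹ * A * (θ z * η z) + (θ z * η z)⁻¹ * mderiv (fun w => θ w * η w) z
      = (η z)⁻¹ * ((θ z)⁻¹ * A * θ z + (θ z)⁻¹ * mderiv θ z) * η z
          + (η z)⁻¹ * mderiv η z)
    ∧
    (trace ((θ z * η z)⁻¹ * A * mderiv (fun w => θ w * η w) z)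
        + (1 / 2 : ℂ) *
            trace ((θ z * η z)⁻¹ * mderiv (fun w => mderiv (fun t => θ t * η t) w) z)
      = trace ((θ z)⁻¹ * A * mderiv θ z)
          + (1 / 2 : ℂ) * trace ((θ z)⁻¹ * mderiv (fun w => mderiv θ w) z)
          + trace ((η z)⁻¹ * ((θ z)⁻¹ * A * θ z + (θ z)⁻¹ * mderiv θ z) * mderiv η z)
          + (1 / 2 : ℂ) * trace ((η z)⁻¹ * mderiv (fun w => mderiv η w) z)) :=
  stmt2_general r U hU z hz θ η A hθ hθ' hη hη' hθz hηz
end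

section
/- Let V ⊆ ℂ be open, let z ∈ V, let μ : V → ℂ be twice differentiable at z with μ′(z) ≠ 0, and let ψ and a be complex-valued functions differentiable at μ(z), with ψ and a defined and differentiable on a neighborhood of μ(z). Define near z the functions ψ̃ := (ψ∘μ)·(μ′)² and ã := (a∘μ)/μ′. Then at z: ψ̃′·ã + 2·ψ̃·ã′ = ((ψ′·a + 2·ψ·a′)∘μ)·(μ′)². -/
/-! The second derivative of the coordinate change enters `ψ̃′ · ã` as `2 ψ a μ″` and
`2 ψ̃ · ã′` as `-2 ψ a μ″`, so it cancels and only the factor `(μ′)²` survives. -/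

namespace QuadraticDifferential

variable {𝕜 : Type*} [NontriviallyNormedField 𝕜]

/-- The local expression of `d_ψ (a ∂/∂f) = (ψ′ a + 2 ψ a′) df ⊗ df`. -/
noncomputable def localDPsi (ψ a : 𝕜 → 𝕜) (x : 𝕜) : 𝕜 :=
  deriv ψ x * a x + 2 * ψ x * deriv a x

variable {ψ a μ : 𝕜 → 𝕜} {z : 𝕜}

theorem hasDerivAt_comp_mul_deriv_sq (hψ : DifferentiableAt 𝕜 ψ (μ z))
    (hμ : DifferentiableAt 𝕜 μ z) (hμ' : DifferentiableAt 𝕜 (deriv μ) z) :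
    HasDerivAt (fun w => ψ (μ w) * deriv μ w ^ 2)
      (deriv ψ (μ z) * deriv μ z ^ 3 + 2 * ψ (μ z) * deriv μ z * deriv (deriv μ) z) z := by
  refine ((hψ.hasDerivAt.comp z hμ.hasDerivAt).fun_mul (hμ'.hasDerivAt.fun_pow 2)).congr_deriv ?_
  simp only [Function.comp_apply]
  push_cast
  ring

theorem hasDerivAt_comp_div_deriv (ha : DifferentiableAt 𝕜 a (μ z))
    (hμ' : DifferentiableAt 𝕜 (deriv μ) z) (hμz : deriv μ z ≠ 0) :
    HasDerivAt (fun w => a (μ w) / deriv μ w)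
      ((deriv a (μ z) * deriv μ z * deriv μ z - a (μ z) * deriv (deriv μ) z)
        / deriv μ z ^ 2) z := by
  have hμ : DifferentiableAt 𝕜 μ z := differentiableAt_of_deriv_ne_zero hμz
  exact (ha.hasDerivAt.comp z hμ.hasDerivAt).div hμ'.hasDerivAt hμz

theorem localDPsi_pullback (hψ : DifferentiableAt 𝕜 ψ (μ z))
    (ha : DifferentiableAt 𝕜 a (μ z)) (hμ' : DifferentiableAt 𝕜 (deriv μ) z)
    (hμz : deriv μ z ≠ 0) :
    localDPsi (fun w => ψ (μ w) * deriv μ w ^ 2) (fun w => a (μ w) / deriv μ w) z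
      = localDPsi ψ a (μ z) * deriv μ z ^ 2 := by
  have hμ : DifferentiableAt 𝕜 μ z := differentiableAt_of_deriv_ne_zero hμz
  rw [localDPsi, localDPsi, (hasDerivAt_comp_mul_deriv_sq hψ hμ hμ').deriv,
    (hasDerivAt_comp_div_deriv ha hμ' hμz).deriv]
  field_simp
  ring

end QuadraticDifferential

open QuadraticDifferential in
theorem stmt12_general (z : ℂ)
    (μ ψ a : ℂ → ℂ)
    (hμ' : DifferentiableAt ℂ (deriv μ) z)
    (hμz : deriv μ z ≠ 0)
    (hψ : ∀ᶠ w in nhds (μ z), DifferentiableAt ℂ ψ w)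
    (ha : ∀ᶠ w in nhds (μ z), DifferentiableAt ℂ a w)
    (ψt aTilde : ℂ → ℂ)
    (hψt : ∀ w, ψt w = ψ (μ w) * (deriv μ w) ^ 2)
    (haT : ∀ w, aTilde w = a (μ w) / deriv μ w) :
    deriv ψt z * aTilde z + 2 * ψt z * deriv aTilde z
      = (deriv ψ (μ z) * a (μ z) + 2 * ψ (μ z) * deriv a (μ z)) * (deriv μ z) ^ 2 := by
  obtain rfl : ψt = fun w => ψ (μ w) * deriv μ w ^ 2 := funext hψt
  obtain rfl : aTilde = fun w => a (μ w) / deriv μ w := funext haT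
  exact localDPsi_pullback hψ.self_of_nhds ha.self_of_nhds hμ' hμz

/-- under a coordinate change f = μ(g), with
ψ̃ := (ψ∘μ)·(μ′)² and ã := (a∘μ)/μ′, at z one has
ψ̃′·ã + 2·ψ̃·ã′ = ((ψ′·a + 2·ψ·a′)∘μ)·(μ′)²,
i.e. the local expressions for d_ψ glue under coordinate changes. -/
theorem stmt12 (V : Set ℂ) (hV : IsOpen V) (z : ℂ) (hz : z ∈ V)
    (μ ψ a : ℂ → ℂ)
    (hμ : ∀ w ∈ V, DifferentiableAt ℂ μ w)
    (hμ' : DifferentiableAt ℂ (deriv μ) z)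
    (hμz : deriv μ z ≠ 0)
    (hψ : ∀ᶠ w in nhds (μ z), DifferentiableAt ℂ ψ w)
    (ha : ∀ᶠ w in nhds (μ z), DifferentiableAt ℂ a w)
    (ψt aTilde : ℂ → ℂ)
    (hψt : ∀ w, ψt w = ψ (μ w) * (deriv μ w) ^ 2)
    (haT : ∀ w, aTilde w = a (μ w) / deriv μ w) :
    deriv ψt z * aTilde z + 2 * ψt z * deriv aTilde z
      = (deriv ψ (μ z) * a (μ z) + 2 * ψ (μ z) * deriv a (μ z)) * (deriv μ z) ^ 2 :=
  stmt12_general z μ ψ a hμ' hμz hψ ha ψt aTilde hψt haT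
end

section
/- Let r ≥ 1 and let θ, η, A, B, C, D, E be r×r complex matrices with θ and η invertible. Then: Tr((θη)⁻¹·A·(B·η + θ·C)) + (1/2)·Tr((θη)⁻¹·(D·η + 2·B·C + θ·E)) = Tr(θ⁻¹·A·B) + (1/2)·Tr(θ⁻¹·D) + Tr(η⁻¹·(θ⁻¹Aθ + θ⁻¹B)·C) + (1/2)·Tr(η⁻¹·E). -/
open Matrix

/-- algebraic form of the cocycle identity for the
extended-connection transformation:
Tr((θη)⁻¹A(Bη + θC)) + ½Tr((θη)⁻¹(Dη + 2BC + θE))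
  = Tr(θ⁻¹AB) + ½Tr(θ⁻¹D) + Tr(η⁻¹(θ⁻¹Aθ + θ⁻¹B)C) + ½Tr(η⁻¹E). -/
theorem stmt13 (r : ℕ) (hr : 1 ≤ r)
    (θ η A B C D E : Matrix (Fin r) (Fin r) ℂ)
    (hθ : IsUnit θ) (hη : IsUnit η) :
    trace ((θ * η)⁻¹ * A * (B * η + θ * C))
        + (1 / 2 : ℂ) * trace ((θ * η)⁻¹ * (D * η + 2 • (B * C) + θ * E))
      = trace (θ⁻¹ * A * B) + (1 / 2 : ℂ) * trace (θ⁻¹ * D)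
          + trace (η⁻¹ * (θ⁻¹ * A * θ + θ⁻¹ * B) * C)
          + (1 / 2 : ℂ) * trace (η⁻¹ * E) := by
  have hθ1 : θ⁻¹ * θ = 1 := Matrix.nonsing_inv_mul θ ((Matrix.isUnit_iff_isUnit_det θ).mp hθ)
  have hη1 : η * η⁻¹ = 1 := Matrix.mul_nonsing_inv η ((Matrix.isUnit_iff_isUnit_det η).mp hη)
  rw [Matrix.mul_inv_rev]
  have t1 : trace (η⁻¹ * θ⁻¹ * A * (B * η)) = trace (θ⁻¹ * A * B) := by
    rw [← mul_assoc, trace_mul_comm, ← mul_assoc, ← mul_assoc, ← mul_assoc, hη1, one_mul]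
  have t2 : trace (η⁻¹ * θ⁻¹ * A * (θ * C)) = trace (η⁻¹ * (θ⁻¹ * A * θ) * C) := by
    simp only [mul_assoc]
  have t3 : trace (η⁻¹ * θ⁻¹ * (D * η)) = trace (θ⁻¹ * D) := by
    rw [← mul_assoc, trace_mul_comm, ← mul_assoc, ← mul_assoc, hη1, one_mul]
  have t4 : trace (η⁻¹ * θ⁻¹ * (B * C)) = trace (η⁻¹ * (θ⁻¹ * B) * C) := by simp only [mul_assoc]
  have t5 : trace (η⁻¹ * θ⁻¹ * (θ * E)) = trace (η⁻¹ * E) := by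
    rw [mul_assoc, ← mul_assoc θ⁻¹, hθ1, one_mul]
  simp only [mul_add, add_mul, trace_add, mul_smul_comm, trace_smul, t1, t2, t3, t4, t5]
  ring
end
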